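/- arXiv:1204.5639 — 3 statements merged into one kernel-verified Lean document; each statement's English description precedes it below -/
import Mathlib

section
/- The number of equivalence classes (regions) of the region equivalence relation ~ on clock valuations over a finite set of clocks C with maximum values M : C → ℕ is finite. -/
noncomputable def fracPart (a : ℝ) : ℝ := a - ⌊a⌋

def RegionEquiv {C : Type*} (M : C → ℕ) (v w : C → ℝ) : Prop :=
  ∀ c d : C,
    (⌊v c⌋ = ⌊w c⌋ ∨ ((M c : ℝ) < v c ∧ (M c : ℝ) < w c)) ∧
    (v c ≤ (M c : ℝ) → (fracPart (v c) = 0 ↔ fracPart (w c) = 0)) ∧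
    (v c ≤ (M c : ℝ) → v d ≤ (M d : ℝ) →
      (fracPart (v c) ≤ fracPart (v d) ↔ fracPart (w c) ≤ fracPart (w d)))

/-!
Every valuation is region-equivalent to a valuation on a fixed finite grid: keep the integer part
of each clock up to its bound, replace its fractional part by its rank `k` among the fractional
parts occurring in the valuation (rank `0` for fractional part `0`) and put it at `k / (|C| + 1)`;
send clocks beyond their bound to `M c + 1`. The rank preserves the order of fractional parts and
which of them vanish, so the grid point is region-equivalent to the valuation.
-/

open Finset

lemma Quot.finite_of_forall_exists_rel {α : Type*} {r : α → α → Prop} (s : Set α)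
    (hs : s.Finite) (h : ∀ x, ∃ y ∈ s, r x y) : Finite (Quot r) := by
  have := hs.to_subtype
  refine Finite.of_surjective (fun y : s => Quot.mk r y.1) fun q => ?_
  induction q using Quot.ind with
  | mk x =>
    obtain ⟨y, hy, hxy⟩ := h x
    exact ⟨⟨y, hy⟩, (Quot.sound hxy).symm⟩

section CountBelow

variable {α : Type*} [LinearOrder α] {s : Finset α} {y z : α}

def countBelow (s : Finset α) (y : α) : ℕ := #{x ∈ s | x < y}

lemma countBelow_mono (h : y ≤ z) : countBelow s y ≤ countBelow s z :=
  card_le_card fun x hx => by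
    simp only [mem_filter] at hx ⊢
    exact ⟨hx.1, hx.2.trans_le h⟩

lemma countBelow_lt_countBelow (hy : y ∈ s) (h : y < z) : countBelow s y < countBelow s z := by
  refine card_lt_card ((ssubset_iff_of_subset fun x hx => ?_).2 ⟨y, ?_, ?_⟩)
  · simp only [mem_filter] at hx ⊢
    exact ⟨hx.1, hx.2.trans h⟩
  · simp [hy, h]
  · simp

lemma countBelow_le_countBelow_iff (hz : z ∈ s) : countBelow s y ≤ countBelow s z ↔ y ≤ z :=
  ⟨fun h => not_lt.1 fun hzy => (countBelow_lt_countBelow hz hzy).not_ge h, countBelow_mono⟩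

lemma countBelow_eq_zero_iff : countBelow s y = 0 ↔ ∀ x ∈ s, y ≤ x := by
  simp [countBelow, filter_eq_empty_iff]

lemma countBelow_lt_card (hy : y ∈ s) : countBelow s y < #s :=
  card_lt_card (filter_ssubset.2 ⟨y, hy, lt_irrefl y⟩)

end CountBelow

lemma fracPart_nonneg (a : ℝ) : 0 ≤ fracPart a := Int.fract_nonneg a

section RegionRep

variable {C : Type*} [Fintype C] (M : C → ℕ) (v : C → ℝ)

noncomputable def fracRank (c : C) : ℕ :=
  countBelow (insert 0 (univ.image fun d => fracPart (v d))) (fracPart (v c))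

lemma mem_fracParts (c : C) : fracPart (v c) ∈ insert 0 (univ.image fun d => fracPart (v d)) :=
  mem_insert_of_mem (mem_image_of_mem _ (mem_univ c))

lemma fracRank_le_card (c : C) : fracRank v c ≤ Fintype.card C := by
  have hlt := countBelow_lt_card (mem_fracParts v c)
  have hins := card_insert_le (0 : ℝ) (univ.image fun d => fracPart (v d))
  have himg := card_image_le (s := (univ : Finset C)) (f := fun d => fracPart (v d))
  rw [card_univ] at himg
  exact Nat.le_of_lt_succ (hlt.trans_le (hins.trans (Nat.succ_le_succ himg)))

lemma fracRank_eq_zero_iff (c : C) : fracRank v c = 0 ↔ fracPart (v c) = 0 := by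
  rw [fracRank, countBelow_eq_zero_iff]
  refine ⟨fun h => le_antisymm (h 0 (mem_insert_self _ _)) (fracPart_nonneg _), fun h x hx => ?_⟩
  rw [h]
  rcases mem_insert.1 hx with rfl | hx
  · rfl
  · obtain ⟨d, -, rfl⟩ := mem_image.1 hx
    exact fracPart_nonneg _

lemma fracRank_le_fracRank_iff (c d : C) :
    fracRank v c ≤ fracRank v d ↔ fracPart (v c) ≤ fracPart (v d) :=
  countBelow_le_countBelow_iff (mem_fracParts v d)

noncomputable def regionRep (c : C) : ℝ :=
  if v c ≤ M c then ⌊v c⌋ + fracRank v c / (Fintype.card C + 1) else M c + 1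

lemma fracRank_div_mem_Ico (c : C) :
    (fracRank v c : ℝ) / (Fintype.card C + 1) ∈ Set.Ico 0 1 := by
  refine ⟨by positivity, (div_lt_one (by positivity)).2 ?_⟩
  exact_mod_cast Nat.lt_succ_of_le (fracRank_le_card v c)

variable {M v}

lemma floor_regionRep {c : C} (hc : v c ≤ M c) : ⌊regionRep M v c⌋ = ⌊v c⌋ := by
  rw [regionRep, if_pos hc, Int.floor_intCast_add,
    Int.floor_eq_zero_iff.2 (fracRank_div_mem_Ico v c), add_zero]

lemma fracPart_regionRep {c : C} (hc : v c ≤ M c) :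
    fracPart (regionRep M v c) = fracRank v c / (Fintype.card C + 1) := by
  rw [show fracPart = Int.fract from rfl, regionRep, if_pos hc, Int.fract_intCast_add,
    Int.fract_eq_self.2 (fracRank_div_mem_Ico v c)]

variable (M v)

lemma regionEquiv_regionRep : RegionEquiv M v (regionRep M v) := by
  have hN : (0 : ℝ) < Fintype.card C + 1 := by positivity
  intro c d
  refine ⟨?_, fun hc => ?_, fun hc hd => ?_⟩
  · by_cases hc : v c ≤ M c
    · exact Or.inl (floor_regionRep hc).symm
    · refine Or.inr ⟨not_le.1 hc, ?_⟩
      rw [regionRep, if_neg hc]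
      exact lt_add_one _
  · rw [fracPart_regionRep hc, div_eq_zero_iff, or_iff_left hN.ne', Nat.cast_eq_zero,
      fracRank_eq_zero_iff]
  · rw [fracPart_regionRep hc, fracPart_regionRep hd, div_le_div_iff_of_pos_right hN,
      Nat.cast_le, fracRank_le_fracRank_iff]

end RegionRep

section RegionGrid

variable {C : Type*} (M : C → ℕ) (N : ℕ)

def regionGrid : Set (C → ℝ) :=
  {w | ∀ c, ∃ n ≤ M c + 1, ∃ k ≤ N, w c = n + k / (N + 1)}

lemma finite_regionGrid [Finite C] : (regionGrid M N).Finite := by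
  refine Set.Finite.pi' (t := fun c => {x : ℝ | ∃ n ≤ M c + 1, ∃ k ≤ N, x = n + k / (N + 1)})
    fun c => ?_
  refine (((Set.finite_Iic (M c + 1)).prod (Set.finite_Iic N)).image
    fun p : ℕ × ℕ => (p.1 : ℝ) + p.2 / (N + 1)).subset ?_
  rintro x ⟨n, hn, k, hk, rfl⟩
  exact ⟨(n, k), ⟨hn, hk⟩, rfl⟩

variable {M N}

lemma nonneg_of_mem_regionGrid {w : C → ℝ} (hw : w ∈ regionGrid M N) (c : C) : 0 ≤ w c := by
  obtain ⟨n, -, k, -, hwc⟩ := hw c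
  rw [hwc]
  positivity

lemma regionRep_mem_regionGrid [Fintype C] {v : C → ℝ} (hv : ∀ c, 0 ≤ v c) :
    regionRep M v ∈ regionGrid M (Fintype.card C) := by
  intro c
  by_cases hc : v c ≤ M c
  · have hfloor : 0 ≤ ⌊v c⌋ := Int.floor_nonneg.2 (hv c)
    refine ⟨⌊v c⌋.toNat, ?_, fracRank v c, fracRank_le_card v c, ?_⟩
    · have := Int.floor_le_floor hc
      rw [Int.floor_natCast] at this
      omega
    · rw [regionRep, if_pos hc]
      rw [← Int.cast_natCast ⌊v c⌋.toNat, Int.toNat_of_nonneg hfloor]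
  · exact ⟨M c + 1, le_rfl, 0, Nat.zero_le _, by simp [regionRep, hc]⟩

end RegionGrid

theorem region_classes_finite {C : Type*} [Finite C] (M : C → ℕ) :
    Finite (Quot (fun v w : {v : C → ℝ // ∀ c, 0 ≤ v c} =>
      RegionEquiv M v.1 w.1)) := by
  cases nonempty_fintype C
  refine Quot.finite_of_forall_exists_rel {v | v.1 ∈ regionGrid M (Fintype.card C)}
    ((finite_regionGrid M _).preimage Subtype.val_injective.injOn) fun v => ?_
  have hrep := regionRep_mem_regionGrid (M := M) v.2
  exact ⟨⟨regionRep M v.1, nonneg_of_mem_regionGrid hrep⟩, hrep, regionEquiv_regionRep M v.1⟩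
end

section
/- Lemma (excluding time-predecessors in IC3): Suppose the transition system satisfies: (a) every state in a path satisfies a convex invariant Inv, (b) paths have the form: an initial state, one time elapse step, then n combined (discrete + time elapse) steps, and (c) states in the same region are forward bisimilar and region-respecting for Inv. If no state in the region of a valid state s is reachable by such a path, then no valid state u with u ≾ s (in a time-predecessor region of s) is reachable by such a path either. -/
abbrev TState (D X C : Type*) := (X → D) × (C → ℝ)

def shift {D X C : Type*} (s : TState D X C) (δ : ℝ) : TState D X C :=
  (s.1, fun c => s.2 c + δ)

/-- Time elapse step of duration δ, with all intermediate states valid. -/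
def Elapse {D X C : Type*} (Inv : TState D X C → Prop) (s u : TState D X C) : Prop :=
  ∃ δ : ℝ, 0 ≤ δ ∧ u = shift s δ ∧ ∀ μ : ℝ, 0 < μ → μ ≤ δ → Inv (shift s μ)

def steps {α : Type*} (R : α → α → Prop) : ℕ → α → α → Prop
  | 0, a, b => a = b
  | n + 1, a, c => ∃ b, R a b ∧ steps R n b c

/-- A combined step: one discrete step followed by one time elapse step. -/
def Combined {D X C : Type*} (Discrete : TState D X C → TState D X C → Prop)
    (Inv : TState D X C → Prop) (s u : TState D X C) : Prop :=
  ∃ m, Discrete s m ∧ Elapse Inv m u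

/-- Two states are region equivalent: equal discrete part, region-equivalent clocks. -/
def SEquiv {D X C : Type*} (M : C → ℕ) (s u : TState D X C) : Prop :=
  s.1 = u.1 ∧ RegionEquiv M s.2 u.2

/-- u is in a time-predecessor region of s. -/
def STimePred {D X C : Type*} (M : C → ℕ) (u s : TState D X C) : Prop :=
  u.1 = s.1 ∧ ∃ δ : ℝ, 0 ≤ δ ∧ RegionEquiv M (fun c => u.2 c + δ) s.2

/-- Reachable by a path: initial state, one time elapse step, then n combined steps. -/
def ReachN {D X C : Type*} (Init Inv : TState D X C → Prop)
    (Discrete : TState D X C → TState D X C → Prop) (n : ℕ) (s : TState D X C) : Prop :=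
  ∃ s0 t, Init s0 ∧ Elapse Inv s0 t ∧ steps (Combined Discrete Inv) n t s

/-!
If `u + δ ~ s`, then `u + δ` satisfies `Inv` because `Inv` respects regions, so by convexity the
delay `δ` from `u` is admissible. A path reaching `u` ends in a time elapse step, which absorbs this
delay, so a path of the same length reaches `u + δ`, a state in the region of `s`.
-/

lemma shift_shift {D X C : Type*} (s : TState D X C) (δ η : ℝ) :
    shift (shift s δ) η = shift s (δ + η) := by
  simp only [shift, add_assoc]

namespace Elapse

variable {D X C : Type*} {Inv : TState D X C → Prop}

lemma trans {a b c : TState D X C} (hab : Elapse Inv a b) (hbc : Elapse Inv b c) :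
    Elapse Inv a c := by
  obtain ⟨δ, hδ, rfl, hInvδ⟩ := hab
  obtain ⟨η, hη, rfl, hInvη⟩ := hbc
  refine ⟨δ + η, by linarith, shift_shift a δ η, fun μ hμ hμle => ?_⟩
  rcases le_or_gt μ δ with hle | hlt
  · exact hInvδ μ hμ hle
  · have hsplit : shift a μ = shift (shift a δ) (μ - δ) := by
      rw [shift_shift, add_sub_cancel]
    rw [hsplit]
    exact hInvη (μ - δ) (by linarith) (by linarith)

lemma of_convex
    (hconv : ∀ (s : TState D X C) (δ η : ℝ), 0 ≤ η → η ≤ δ →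
      Inv s → Inv (shift s δ) → Inv (shift s η))
    {u : TState D X C} {δ : ℝ} (hδ : 0 ≤ δ) (hu : Inv u) (huδ : Inv (shift u δ)) :
    Elapse Inv u (shift u δ) :=
  ⟨δ, hδ, rfl, fun μ hμ hμδ => hconv u δ μ hμ.le hμδ hu huδ⟩

end Elapse

lemma steps_succ_of_absorb {α : Type*} {R S : α → α → Prop}
    (habsorb : ∀ a b c, R a b → S b c → R a c) :
    ∀ (n : ℕ) {a b c : α}, steps R (n + 1) a b → S b c → steps R (n + 1) a c
  | 0, _, _, c, ⟨_, hR, rfl⟩, hS => ⟨c, habsorb _ _ _ hR hS, rfl⟩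
  | n + 1, _, _, _, ⟨b', hR, hsteps⟩, hS => ⟨b', hR, steps_succ_of_absorb habsorb n hsteps hS⟩

lemma Combined.elapse_trans {D X C : Type*} {Discrete : TState D X C → TState D X C → Prop}
    {Inv : TState D X C → Prop} {a b c : TState D X C}
    (hab : Combined Discrete Inv a b) (hbc : Elapse Inv b c) : Combined Discrete Inv a c :=
  let ⟨m, hdisc, hel⟩ := hab
  ⟨m, hdisc, hel.trans hbc⟩

lemma ReachN.of_elapse {D X C : Type*} {Init Inv : TState D X C → Prop}
    {Discrete : TState D X C → TState D X C → Prop} {n : ℕ} {u w : TState D X C}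
    (hu : ReachN Init Inv Discrete n u) (huw : Elapse Inv u w) :
    ReachN Init Inv Discrete n w := by
  obtain ⟨s₀, t, hinit, hel, hsteps⟩ := hu
  cases n with
  | zero =>
    obtain rfl : t = u := hsteps
    exact ⟨s₀, w, hinit, hel.trans huw, rfl⟩
  | succ n =>
    exact ⟨s₀, t, hinit, hel, steps_succ_of_absorb (R := Combined Discrete Inv) (S := Elapse Inv)
      (fun _ _ _ => Combined.elapse_trans) n hsteps huw⟩

theorem exclude_time_predecessors_general {D X C : Type*} (M : C → ℕ)
    (Init Inv : TState D X C → Prop)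
    (Discrete : TState D X C → TState D X C → Prop)
    (hconv : ∀ (s : TState D X C) (δ η : ℝ), 0 ≤ η → η ≤ δ →
      Inv s → Inv (shift s δ) → Inv (shift s η))
    (hresp : ∀ s u, SEquiv M s u → (Inv s ↔ Inv u))
    (n : ℕ) (s : TState D X C) (hsInv : Inv s)
    (hunreach : ∀ t, SEquiv M t s → ¬ ReachN Init Inv Discrete n t) :
    ∀ u, Inv u → STimePred M u s → ¬ ReachN Init Inv Discrete n u := by
  rintro u hu ⟨hdisc, δ, hδ, hregion⟩ hreach
  have hequiv : SEquiv M (shift u δ) s := ⟨hdisc, hregion⟩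
  have hInvδ : Inv (shift u δ) := (hresp _ s hequiv).mpr hsInv
  exact hunreach _ hequiv (hreach.of_elapse (Elapse.of_convex hconv hδ hu hInvδ))

theorem exclude_time_predecessors {D X C : Type*} (M : C → ℕ)
    (Init Inv : TState D X C → Prop)
    (Discrete : TState D X C → TState D X C → Prop)
    (hconv : ∀ (s : TState D X C) (δ η : ℝ), 0 ≤ η → η ≤ δ →
      Inv s → Inv (shift s δ) → Inv (shift s η))
    (hresp : ∀ s u, SEquiv M s u → (Inv s ↔ Inv u))
    (hbisim : ∀ s s' u, (Discrete s s' ∨ Elapse Inv s s') → SEquiv M s u →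
      ∃ u', (Discrete u u' ∨ Elapse Inv u u') ∧ SEquiv M s' u')
    (n : ℕ) (s : TState D X C) (hsInv : Inv s)
    (hunreach : ∀ t, SEquiv M t s → ¬ ReachN Init Inv Discrete n t) :
    ∀ u, Inv u → STimePred M u s → ¬ ReachN Init Inv Discrete n u :=
  exclude_time_predecessors_general M Init Inv Discrete hconv hresp n s hsInv hunreach
end

section
/- In a transition system with an equivalence relation ~ of finite index that is a forward bisimulation, any state whose class is reachable is reachable via a path visiting pairwise region-distinct states: if s is reachable, then some u ~ s is reachable via a path σ₀ … σₙ = u with σᵢ ≁ σⱼ for all i < j. -/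
theorem reachable_via_region_simple_path {S : Type*} (Step : S → S → Prop)
    (I : Set S) (E : S → S → Prop)
    (hE : Equivalence E) (hfin : Finite (Quot E))
    (hrespI : ∀ s u, E s u → (s ∈ I ↔ u ∈ I))
    (hbisim : ∀ s s' u, Step s s' → E s u → ∃ u', Step u u' ∧ E s' u')
    (s : S) (hreach : ∃ s0 ∈ I, Relation.ReflTransGen Step s0 s) :
    ∃ u, E u s ∧ ∃ (n : ℕ) (σ : ℕ → S), σ 0 ∈ I ∧ σ n = u ∧
      (∀ i, i < n → Step (σ i) (σ (i + 1))) ∧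
      (∀ i j, i < j → j ≤ n → ¬ E (σ i) (σ j)) := by
  obtain ⟨s0, h0, hst⟩ := hreach
  induction hst with
  | refl =>
    exact ⟨s0, hE.refl s0, 0, fun _ => s0, h0, rfl,
      fun i hi => by omega, fun i j hij hj => by omega⟩
  | @tail b c hbc hstep ih =>
    obtain ⟨u, hEus, n, σ, hσ0, hσn, hstep', hdist⟩ := ih
    obtain ⟨u', hstepu, hE'⟩ := hbisim b c u hstep (hE.symm hEus)
    by_cases hcase : ∃ i ≤ n, E (σ i) u'
    · obtain ⟨i, hin, hEi⟩ := hcase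
      exact ⟨σ i, hE.trans hEi (hE.symm hE'), i, σ, hσ0, rfl,
        fun j hj => hstep' j (by omega), fun j k hjk hkn => hdist j k hjk (by omega)⟩
    · push_neg at hcase
      refine ⟨u', hE.symm hE', n + 1, fun m => if m ≤ n then σ m else u', ?_, ?_, ?_, ?_⟩
      · simp [Nat.zero_le, hσ0]
      · simp
      · intro i hi
        rcases Nat.lt_or_ge i n with h | h
        · simp only [show i ≤ n from by omega, show i + 1 ≤ n from by omega, if_true]
          exact hstep' i h
        · have : i = n := by omega
          rw [this]
          simp only [le_refl, if_true, show ¬ (n + 1 ≤ n) from by omega, if_false]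
          rw [hσn]; exact hstepu
      · intro i j hij hjn
        rcases Nat.lt_or_ge j (n + 1) with h | h
        · simp only [show i ≤ n from by omega, show j ≤ n from by omega, if_true]
          exact hdist i j hij (by omega)
        · have : j = n + 1 := by omega
          rw [this]
          simp only [show i ≤ n from by omega, if_true, show ¬ (n + 1 ≤ n) from by omega,
            if_false]
          exact hcase i (by omega)
end
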